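/- Let X be an Anosov vector field on a closed connected orientable 3-manifold M, not topologically equivalent to a suspension. Let V₁,…,V_m be a fine plug decomposition of (M,X) and W₁,…,W_p an arbitrary plug decomposition of (M,X). Then for every i ∈ {1,…,m} there exists j_i ∈ {1,…,p} such that the maximal invariant set Λ_i of V_i is contained in the maximal invariant set L_{j_i} of W_{j_i}. In other words, the maximal invariant sets of the elements of a fine plug decomposition are contained in the maximal invariant sets of the elements of any other plug decomposition. -/
import Mathlib


/-!
Framework for formalizing "A spectral-like decomposition for transitive Anosov
flows in dimension three" (Béguin–Bonatti–Yu).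

An Anosov vector field on a closed (orientable) 3-manifold is modelled by its
complete continuous flow `φ : Flow ℝ M`, together with the distinguished family
of embedded 2-tori transverse to the vector field, which is the only
differential-geometric input needed for the statements below.  For an Anosov
flow, a subset is a (saddle) hyperbolic set iff it is compact and invariant, so
hyperbolicity does not appear explicitly in the definition of a basic set.
-/

open Set Topology

noncomputable section

namespace AnosovPaper

variable {M : Type*} [TopologicalSpace M]

/-- The orbit of the flow `φ` through `x`. -/
def orbit (φ : Flow ℝ M) (x : M) : Set M := Set.range fun t : ℝ => φ t x

/-- `γ` is a periodic orbit of the flow `φ`. -/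
def IsPeriodicOrbit (φ : Flow ℝ M) (γ : Set M) : Prop :=
  ∃ (x : M) (T : ℝ), 0 < T ∧ φ T x = x ∧ (∃ t : ℝ, φ t x ≠ x) ∧ γ = orbit φ x

/-- `S` is invariant under the flow `φ`. -/
def FlowInvariant (φ : Flow ℝ M) (S : Set M) : Prop := ∀ t : ℝ, ∀ x ∈ S, φ t x ∈ S

/-- The maximal invariant set `⋂ t, φ^t (V)` of a region `V`. -/
def maxInv (φ : Flow ℝ M) (V : Set M) : Set M := {x | ∀ t : ℝ, φ t x ∈ V}

/-- The orbit segment of `x` inside `V` : the points `φ^t x` such that the whole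
segment of orbit between `x` and `φ^t x` stays in `V`. -/
def orbitSegIn (φ : Flow ℝ M) (V : Set M) (x : M) : Set M :=
  {y | ∃ t : ℝ, y = φ t x ∧ ∀ s ∈ Set.uIcc 0 t, φ s x ∈ V}

/-- The restriction of the flow to `Λ` is (topologically) transitive:
some orbit contained in `Λ` is dense in `Λ`. -/
def IsTransitiveOn (φ : Flow ℝ M) (Λ : Set M) : Prop := ∃ x ∈ Λ, Λ ⊆ closure (orbit φ x)

/-- `Λ` is a locally maximal set for the flow `φ`. -/
def IsLocallyMaximalSet (φ : Flow ℝ M) (Λ : Set M) : Prop :=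
  ∃ V : Set M, IsOpen V ∧ Λ ⊆ V ∧ maxInv φ V = Λ

/-- Topological rendering of "the orbit of `x` crosses the frontier of `N`
transversely at `x`, entering `N`". -/
def CrossesInAt (φ : Flow ℝ M) (N : Set M) (x : M) : Prop :=
  x ∈ frontier N ∧ ∃ ε > (0:ℝ), (∀ t ∈ Set.Ioo (0:ℝ) ε, φ t x ∈ interior N) ∧
    (∀ t ∈ Set.Ioo (-ε) (0:ℝ), φ t x ∉ closure N)

/-- Topological rendering of "the orbit of `x` crosses the frontier of `N`
transversely at `x`, exiting `N`". -/
def CrossesOutAt (φ : Flow ℝ M) (N : Set M) (x : M) : Prop :=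
  x ∈ frontier N ∧ ∃ ε > (0:ℝ), (∀ t ∈ Set.Ioo (0:ℝ) ε, φ t x ∉ closure N) ∧
    (∀ t ∈ Set.Ioo (-ε) (0:ℝ), φ t x ∈ interior N)

/-- An Anosov vector field on a 3-manifold, abstracted as its flow together with
the family of embedded 2-tori transverse to the vector field. -/
structure AnosovFlow (M : Type*) [TopologicalSpace M] where
  /-- the flow of the Anosov vector field -/
  φ : Flow ℝ M
  /-- an Anosov vector field is nonsingular -/
  nonsingular : ∀ x : M, ∃ t : ℝ, φ t x ≠ x
  /-- `IsTransverseTorus T` : `T` is (the image of) an embedded 2-torus transverse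
  to the vector field. -/
  IsTransverseTorus : Set M → Prop
  transverseTorus_compact : ∀ T, IsTransverseTorus T → IsCompact T
  transverseTorus_nonempty : ∀ T, IsTransverseTorus T → T.Nonempty
  /-- orbits meet a transverse torus in locally isolated points -/
  transverseTorus_crosses : ∀ T, IsTransverseTorus T → ∀ x ∈ T, ∃ ε > (0:ℝ),
    ∀ t ∈ Set.Ioo (-ε) ε, t ≠ 0 → φ t x ∉ T

namespace AnosovFlow

variable (X : AnosovFlow M)

/-- The core of `X` : points lying on no transverse torus. -/
def core : Set M := {x | ∀ T : Set M, X.IsTransverseTorus T → x ∉ T}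

/-- `X` is topologically equivalent to the suspension of an Anosov diffeomorphism
of `𝕋²`.  Following the classical characterization (used in the paper), this
holds iff some transverse torus is a global cross-section, i.e. meets every
orbit of the flow. -/
def TopEquivSuspension : Prop :=
  ∃ T : Set M, X.IsTransverseTorus T ∧ ∀ x : M, (orbit X.φ x ∩ T).Nonempty

/-- A basic set for the Anosov flow `X` : a nonempty compact invariant
transitive locally maximal set.  (For an Anosov flow, hyperbolicity of a compact
invariant set is automatic.) -/
def IsBasicSet (Λ : Set M) : Prop :=
  Λ.Nonempty ∧ IsCompact Λ ∧ FlowInvariant X.φ Λ ∧ IsTransitiveOn X.φ Λ ∧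
    IsLocallyMaximalSet X.φ Λ

/-- The tubular neighborhood `X^{(-ε,ε)}(T)` of a set `T`. -/
def thicken (ε : ℝ) (T : Set M) : Set M := ⋃ t ∈ Set.Ioo (-ε) ε, X.φ t '' T

/-- The complement of the tubular neighborhoods of the tori `T i`. -/
def cutComplement {n : ℕ} (T : Fin n → Set M) (ε : ℝ) : Set M :=
  Set.univ \ ⋃ i, X.thicken ε (T i)

/-- `V 0, …, V (m-1)` is the plug decomposition of `(M,X)` associated with the
finite collection `T 0, …, T (n-1)` of pairwise disjoint transverse tori and
with `ε` : the `V k` are exactly the connected components of the complement of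
the pairwise disjoint tubular neighborhoods `X^{(-ε,ε)}(T i)`. -/
def IsPlugDecomposition {n m : ℕ} (T : Fin n → Set M) (ε : ℝ) (V : Fin m → Set M) : Prop :=
  (∀ i, X.IsTransverseTorus (T i)) ∧
  (∀ i j, i ≠ j → Disjoint (T i) (T j)) ∧
  0 < ε ∧
  (∀ i j, i ≠ j → Disjoint (X.thicken ε (T i)) (X.thicken ε (T j))) ∧
  (∀ k, ∃ x ∈ X.cutComplement T ε, V k = connectedComponentIn (X.cutComplement T ε) x) ∧
  (∀ x ∈ X.cutComplement T ε, ∃ k, V k = connectedComponentIn (X.cutComplement T ε) x) ∧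
  Function.Injective V

/-- `V` is a plug decomposition of `(M,X)` (for some collection of tori). -/
def IsPlugDecompositionFamily {m : ℕ} (V : Fin m → Set M) : Prop :=
  ∃ (n : ℕ) (T : Fin n → Set M) (ε : ℝ), X.IsPlugDecomposition T ε V

/-- A fine plug decomposition : a plug decomposition whose pieces have the core
basic sets as maximal invariant sets, i.e. each maximal invariant set is a basic
set and together they fill up the core of `X`. -/
def IsFinePlugDecomposition {m : ℕ} (V : Fin m → Set M) : Prop :=
  X.IsPlugDecompositionFamily V ∧
  (∀ i, X.IsBasicSet (maxInv X.φ (V i))) ∧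
  (⋃ i, maxInv X.φ (V i)) = X.core

end AnosovFlow

/-- `h` sends each oriented orbit segment of `φ` in `V` into the corresponding
oriented orbit of `ψ` in `W`, preserving the time orientation. -/
def MapsOrbits {M N : Type*} [TopologicalSpace M] [TopologicalSpace N]
    (φ : Flow ℝ M) (ψ : Flow ℝ N) (V : Set M) (W : Set N) (h : V → W) : Prop :=
  ∀ (x : V) (t : ℝ) (hseg : ∀ s ∈ Set.uIcc 0 t, φ s (x : M) ∈ V),
    ∃ t' : ℝ, (0 < t → 0 < t') ∧ (t < 0 → t' < 0) ∧
      (∀ s ∈ Set.uIcc 0 t', ψ s ((h x : N)) ∈ W) ∧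
      ((h ⟨φ t (x : M), hseg t Set.right_mem_uIcc⟩ : N)) = ψ t' (h x : N)

/-- Topological equivalence of the restrictions of the flows `φ` and `ψ` to `V`
and `W` : a homeomorphism `V ≃ₜ W` mapping each oriented orbit of `φ|V` onto an
oriented orbit of `ψ|W`. -/
def PlugTopEquiv {M N : Type*} [TopologicalSpace M] [TopologicalSpace N]
    (φ : Flow ℝ M) (ψ : Flow ℝ N) (V : Set M) (W : Set N) : Prop :=
  ∃ h : ↥V ≃ₜ ↥W, MapsOrbits φ ψ V W ⇑h ∧ MapsOrbits ψ φ W V ⇑h.symm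

namespace AnosovFlow

variable (X : AnosovFlow M)

/-- Two plug decompositions of `(M,X)` are piecewise topologically equivalent. -/
def PiecewiseTopEquiv {m p : ℕ} (V : Fin m → Set M) (W : Fin p → Set M) : Prop :=
  ∃ e : Fin m ≃ Fin p, ∀ i, PlugTopEquiv X.φ X.φ (V i) (W (e i))

/-- Two plug decompositions of `(M,X)` are flow isotopy equivalent : some
homeomorphism of the form `x ↦ X^{θ(x)}(x)` maps the pieces of the first onto
the pieces of the second. -/
def FlowIsotopyEquiv {m p : ℕ} (V : Fin m → Set M) (W : Fin p → Set M) : Prop :=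
  ∃ (θ : M → ℝ) (h : M ≃ₜ M) (e : Fin m ≃ Fin p),
    (∀ x : M, h x = X.φ (θ x) x) ∧ ∀ i, h '' V i = W (e i)

end AnosovFlow

end AnosovPaper

namespace AnosovPaper

/-- The maximal invariant sets of the pieces of a fine plug
decomposition are contained in the maximal invariant sets of the pieces of any
other plug decomposition. -/
theorem fine_plug_decomposition_minimal
    {M : Type*} [TopologicalSpace M] [CompactSpace M] [ConnectedSpace M] [T2Space M]
    [ChartedSpace (EuclideanSpace ℝ (Fin 3)) M]
    (X : AnosovFlow M) (hns : ¬ X.TopEquivSuspension)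
    {m p : ℕ} (V : Fin m → Set M) (W : Fin p → Set M)
    (hV : X.IsFinePlugDecomposition V)
    (hW : X.IsPlugDecompositionFamily W) :
    ∀ i : Fin m, ∃ j : Fin p, maxInv X.φ (V i) ⊆ maxInv X.φ (W j) := by
  obtain ⟨_, hVbasic, hVcore⟩ := hV
  obtain ⟨n, T, ε, hTtori, _, _, _, _, hWall, _⟩ := hW
  intro i
  obtain ⟨hne, hcomp, hinv, ⟨x, hxΛ, hdense⟩, -⟩ := hVbasic i
  set Λ := maxInv X.φ (V i) with hΛ
  have hΛcore : Λ ⊆ X.core := hVcore ▸ Set.subset_iUnion (fun k => maxInv X.φ (V k)) i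
  have hΛcut : Λ ⊆ X.cutComplement T ε := by
    intro y hy
    refine ⟨trivial, fun hmem => ?_⟩
    simp only [AnosovFlow.thicken, Set.mem_iUnion, Set.mem_image] at hmem
    obtain ⟨k, t, ht, z, hz, hzy⟩ := hmem
    have hzΛ : z ∈ Λ := by
      have h1 : X.φ (-t) y ∈ Λ := hinv (-t) y hy
      have h2 : X.φ (-t) y = z := by
        rw [← hzy, ← Flow.map_add, neg_add_cancel, Flow.map_zero_apply]
      rwa [h2] at h1
    exact hΛcore hzΛ (T k) (hTtori k) hz
  have horb : orbit X.φ x ⊆ Λ := by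
    rintro y ⟨t, rfl⟩; exact hinv t x hxΛ
  have hΛeq : Λ = closure (orbit X.φ x) :=
    Set.Subset.antisymm hdense (closure_minimal horb hcomp.isClosed)
  have hcont : Continuous fun t : ℝ => X.φ t x :=
    X.φ.cont'.comp (continuous_id.prodMk continuous_const)
  have hconn : IsPreconnected Λ := by
    rw [hΛeq]
    exact (isConnected_range hcont).isPreconnected.closure
  have hsub : Λ ⊆ connectedComponentIn (X.cutComplement T ε) x :=
    hconn.subset_connectedComponentIn hxΛ hΛcut
  obtain ⟨k, hk⟩ := hWall x (hΛcut hxΛ)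
  exact ⟨k, fun y hy t => hk ▸ hsub (hinv t y hy)⟩

end AnosovPaper
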